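/- For even p ∈ ℕ, define c¹_{p,j} = (−1)^{j+1}((p/2)!)²/(j·(p/2+j)!·(p/2−j)!) for j ∈ {−p/2,…,−1,1,…,p/2} and c¹_{p,0} = 0, and c²_{p,j} = 2c¹_{p,j}/j for j ≠ 0, c²_{p,0} = −2∑_{i=1}^{p/2} 1/i². Then ∑_{j=−p/2}^{p/2} c²_{p,j} j^k = 0 for k = 0, k = 1, and for all odd k, and ∑_{j=−p/2}^{p/2} c²_{p,j} j² = 2. -/

import Mathlib

/-!
The weights are even in `j` (`c¹` is odd), so the odd moments cancel in pairs `±j`. For `j ≥ 1`,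
`c²_j = 2 (-1)^(j+1) r_j / j²` with `r_j = (m!)² / ((m+j)! (m-j)!) = C(2m, m+j) / C(2m, m)`.
The second moment is therefore `4 ∑ (-1)^(j+1) r_j`, and this alternating sum telescopes to `1/2`
because `r_(j+1) (m+j+1) = r_j (m-j)`. The zeroth moment vanishes because
`∑ (-1)^(j+1) r_j / j² = ½ ∑ 1/i²`, by induction on `m`: the relation
`r(m,j) (m+1)² = r(m+1,j) ((m+1)² - j²)` splits the sum for `m + 1` into the sum for `m` plus
`(m+1)⁻²` times the alternating sum, which is `1/2`.
-/

/-- Weights `c¹_{p,j}` of the `p`th-order (`p = 2m`) centered difference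
approximation of the first derivative. -/
noncomputable def c1 (m : ℕ) (j : ℤ) : ℝ :=
  if j = 0 then 0
  else ((-1 : ℝ)^(j+1) * (Nat.factorial m : ℝ)^2)
    / ((j : ℝ) * (Nat.factorial ((m : ℤ) + j).toNat : ℝ)
        * (Nat.factorial ((m : ℤ) - j).toNat : ℝ))

/-- Weights `c²_{p,j}` of the `p`th-order (`p = 2m`) centered difference
approximation of the second derivative: `c²_{p,j} = 2c¹_{p,j}/j` for `j ≠ 0`
and `c²_{p,0} = −2∑_{i=1}^{p/2} 1/i²`. -/
noncomputable def c2 (m : ℕ) (j : ℤ) : ℝ :=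
  if j = 0 then -2 * ∑ i ∈ Finset.Icc 1 m, (1 : ℝ) / (i : ℝ)^2
  else 2 * c1 m j / (j : ℝ)

open Finset Nat

noncomputable def factorialRatio (m j : ℕ) : ℝ :=
  (m ! : ℝ) ^ 2 / ((m + j)! * (m - j)!)

@[simp]
lemma factorialRatio_zero_right (m : ℕ) : factorialRatio m 0 = 1 := by
  simp [factorialRatio, sq, factorial_ne_zero]

lemma factorialRatio_succ_right {m j : ℕ} (h : j < m) :
    factorialRatio m (j + 1) * (m + j + 1) = factorialRatio m j * (m - j) := by
  have hsub : m - j = (m - (j + 1)) + 1 := by omega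
  rw [factorialRatio, factorialRatio, hsub, ← add_assoc, factorial_succ, factorial_succ]
  have hcast : ((m - (j + 1) : ℕ) : ℝ) + 1 = m - j := by
    rw [Nat.cast_sub h]; push_cast; ring
  have hmj : (m : ℝ) - j ≠ 0 := sub_ne_zero.mpr (by exact_mod_cast h.ne')
  push_cast
  rw [hcast]
  field_simp

lemma factorialRatio_mul_succ_sq {m j : ℕ} (h : j ≤ m) :
    factorialRatio m j * ((m : ℝ) + 1) ^ 2
      = factorialRatio (m + 1) j * (((m : ℝ) + 1) ^ 2 - (j : ℝ) ^ 2) := by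
  have hj : (j : ℝ) ≤ m := by exact_mod_cast h
  have hpos : (m : ℝ) - j + 1 ≠ 0 := by linarith
  rw [factorialRatio, factorialRatio, show m + 1 + j = (m + j) + 1 by omega,
    show m + 1 - j = (m - j) + 1 by omega, factorial_succ, factorial_succ, factorial_succ]
  push_cast [Nat.cast_sub h]
  rw [div_mul_eq_mul_div, div_mul_eq_mul_div, div_eq_div_iff (by positivity)]
  · ring
  · exact mul_ne_zero (by positivity) (mul_ne_zero hpos (by positivity))

lemma sum_alternating_factorialRatio_partial {m k : ℕ} (hm : m ≠ 0) (hk : k ≤ m) :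
    ∑ j ∈ Icc 1 k, (-1 : ℝ) ^ (j + 1) * factorialRatio m j
      = 1 / 2 + (-1) ^ (k + 1) * (m - k) * factorialRatio m k / (2 * m) := by
  induction k with
  | zero => field_simp; simp
  | succ k ih =>
    rw [sum_Icc_succ_top (by omega), ih (by omega)]
    have hrec := factorialRatio_succ_right (show k < m by omega)
    push_cast
    field_simp
    linear_combination (-1) ^ k * hrec

lemma sum_alternating_factorialRatio {m : ℕ} (hm : m ≠ 0) :
    ∑ j ∈ Icc 1 m, (-1 : ℝ) ^ (j + 1) * factorialRatio m j = 1 / 2 := by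
  simp [sum_alternating_factorialRatio_partial hm le_rfl]

lemma factorialRatio_succ_div_sq {m j : ℕ} (h : j ≤ m) (hj : j ≠ 0) :
    factorialRatio (m + 1) j / (j : ℝ) ^ 2
      = factorialRatio m j / (j : ℝ) ^ 2 + factorialRatio (m + 1) j / ((m : ℝ) + 1) ^ 2 := by
  have hrec := factorialRatio_mul_succ_sq h
  field_simp
  linear_combination -hrec

lemma sum_alternating_factorialRatio_div_sq (m : ℕ) :
    ∑ j ∈ Icc 1 m, (-1 : ℝ) ^ (j + 1) * factorialRatio m j / (j : ℝ) ^ 2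
      = 1 / 2 * ∑ i ∈ Icc 1 m, (1 : ℝ) / (i : ℝ) ^ 2 := by
  induction m with
  | zero => simp
  | succ m ih =>
    have hsplit : ∑ j ∈ Icc 1 (m + 1), (-1 : ℝ) ^ (j + 1) * factorialRatio (m + 1) j / (j : ℝ) ^ 2
        = ∑ j ∈ Icc 1 m, (-1 : ℝ) ^ (j + 1) * factorialRatio m j / (j : ℝ) ^ 2
          + (∑ j ∈ Icc 1 (m + 1), (-1 : ℝ) ^ (j + 1) * factorialRatio (m + 1) j)
            / ((m : ℝ) + 1) ^ 2 := by
      rw [sum_Icc_succ_top (by omega), sum_Icc_succ_top (by omega), add_div, sum_div,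
        ← add_assoc, ← sum_add_distrib]
      congr 1
      · refine sum_congr rfl fun j hj => ?_
        rw [mem_Icc] at hj
        rw [mul_div_assoc, mul_div_assoc, mul_div_assoc, ← mul_add,
          factorialRatio_succ_div_sq hj.2 (by omega)]
      · push_cast
        ring
    rw [hsplit, ih, sum_alternating_factorialRatio (succ_ne_zero m), sum_Icc_succ_top (by omega)]
    push_cast
    ring

lemma c1_neg (m : ℕ) (j : ℤ) : c1 m (-j) = -c1 m j := by
  rcases eq_or_ne j 0 with rfl | hj
  · simp [c1]
  have hsign : (-1 : ℝ) ^ (-j + 1) = (-1) ^ (j + 1) := by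
    simp only [neg_one_zpow_eq_ite, Int.even_add_one, even_neg]
  rw [c1, c1, if_neg (neg_ne_zero.mpr hj), if_neg hj, hsign, sub_neg_eq_add, ← sub_eq_add_neg]
  push_cast
  ring

lemma c2_neg (m : ℕ) (j : ℤ) : c2 m (-j) = c2 m j := by
  rcases eq_or_ne j 0 with rfl | hj
  · simp
  rw [c2, c2, if_neg (neg_ne_zero.mpr hj), if_neg hj, c1_neg]
  push_cast
  rw [mul_neg, neg_div_neg_eq]

lemma c2_natCast {m j : ℕ} (hj : j ≠ 0) (hjm : j ≤ m) :
    c2 m j = 2 * (-1) ^ (j + 1) * factorialRatio m j / (j : ℝ) ^ 2 := by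
  have hj' : (j : ℤ) ≠ 0 := by exact_mod_cast hj
  rw [c2, if_neg hj', c1, if_neg hj', show ((m : ℤ) + j).toNat = m + j by omega,
    show ((m : ℤ) - j).toNat = m - j by omega,
    show (j : ℤ) + 1 = ((j + 1 : ℕ) : ℤ) by push_cast; rfl, zpow_natCast, factorialRatio]
  push_cast
  field_simp

lemma sum_Icc_neg_natCast {M : Type*} [AddCommMonoid M] (f : ℤ → M) (m : ℕ) :
    ∑ j ∈ Icc (-(m : ℤ)) m, f j = f 0 + ∑ j ∈ Icc 1 m, (f j + f (-j)) := by
  induction m with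
  | zero => simp
  | succ n ih =>
    have hIcc : Icc (-((n + 1 : ℕ) : ℤ)) ((n + 1 : ℕ) : ℤ)
        = insert (-((n + 1 : ℕ) : ℤ)) (insert ((n + 1 : ℕ) : ℤ) (Icc (-(n : ℤ)) n)) := by
      ext x
      simp only [mem_Icc, mem_insert]
      omega
    rw [hIcc, sum_insert (by simp; omega), sum_insert (by simp), ih,
      sum_Icc_succ_top (by omega)]
    push_cast
    abel

lemma sum_c2_mul (m : ℕ) (g : ℤ → ℝ) :
    ∑ j ∈ Icc (-(m : ℤ)) m, c2 m j * g j
      = c2 m 0 * g 0 + ∑ j ∈ Icc 1 m, c2 m j * (g j + g (-j)) := by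
  simp only [sum_Icc_neg_natCast, c2_neg, mul_add]

lemma sum_c2_mul_pow_of_odd (m : ℕ) {k : ℕ} (hk : Odd k) :
    ∑ j ∈ Icc (-(m : ℤ)) m, c2 m j * (j : ℝ) ^ k = 0 := by
  simp [sum_c2_mul m (fun j => (j : ℝ) ^ k), hk.neg_pow, hk.pos.ne']

lemma sum_c2 (m : ℕ) : ∑ j ∈ Icc (-(m : ℤ)) m, c2 m j = 0 := by
  calc ∑ j ∈ Icc (-(m : ℤ)) m, c2 m j
      = c2 m 0 * 1 + ∑ j ∈ Icc 1 m, c2 m j * (1 + 1) := by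
        simpa using sum_c2_mul m fun _ => 1
    _ = c2 m 0 + 4 * ∑ j ∈ Icc 1 m, (-1 : ℝ) ^ (j + 1) * factorialRatio m j / (j : ℝ) ^ 2 := by
        rw [mul_one, mul_sum]
        congr 1
        refine sum_congr rfl fun j hj => ?_
        rw [c2_natCast (by grind) (mem_Icc.mp hj).2]
        ring
    _ = 0 := by
        rw [sum_alternating_factorialRatio_div_sq, c2, if_pos rfl]
        ring

lemma sum_c2_mul_sq {m : ℕ} (hm : m ≠ 0) :
    ∑ j ∈ Icc (-(m : ℤ)) m, c2 m j * (j : ℝ) ^ 2 = 2 := by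
  calc ∑ j ∈ Icc (-(m : ℤ)) m, c2 m j * (j : ℝ) ^ 2
      = ∑ j ∈ Icc 1 m, c2 m j * ((j : ℝ) ^ 2 + (j : ℝ) ^ 2) := by
        simp [sum_c2_mul m fun j => (j : ℝ) ^ 2]
    _ = 4 * ∑ j ∈ Icc 1 m, (-1 : ℝ) ^ (j + 1) * factorialRatio m j := by
        rw [mul_sum]
        refine sum_congr rfl fun j hj => ?_
        have hj0 : j ≠ 0 := by grind
        rw [c2_natCast hj0 (mem_Icc.mp hj).2]
        field_simp
        ring
    _ = 2 := by
        rw [sum_alternating_factorialRatio hm]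
        norm_num

/-- Moment conditions of the centered second-derivative stencil of order
`p = 2m`, `m ≥ 1`: `∑_j c²_{p,j} j^k = 0` for `k = 0`, `k = 1` and all odd `k`,
while `∑_j c²_{p,j} j² = 2`. -/
theorem centered_difference_moments (m : ℕ) (hm : 1 ≤ m) :
    (∀ k : ℕ, k = 0 ∨ k = 1 ∨ Odd k →
      ∑ j ∈ Finset.Icc (-(m : ℤ)) (m : ℤ), c2 m j * (j : ℝ)^k = 0)
    ∧ ∑ j ∈ Finset.Icc (-(m : ℤ)) (m : ℤ), c2 m j * (j : ℝ)^2 = 2 := by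
  refine ⟨?_, sum_c2_mul_sq (by omega)⟩
  rintro k (rfl | rfl | hk)
  · simpa using sum_c2 m
  · exact sum_c2_mul_pow_of_odd m odd_one
  · exact sum_c2_mul_pow_of_odd m hk
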